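/- Let G be a profinite group with an open subgroup G' of index at most 2 that is torsion-free, and let E be a torsion-free profinite group. Let φ : G ⋆ E → Z/2Z be the homomorphism determined by E → {1} and the quotient G → G/G', and let G'_⋆ = ker(φ). Then G'_⋆ contains no involutions; in particular, the set of involutions Inv(G ⋆ E) is closed in G ⋆ E. -/

import Mathlib

/-!
An involution `x` of `G ⋆ E` is conjugate into `G` or into `E` (Herfort–Ribes for involutions).
If moreover `φ x = 1`, the conjugate lies in `G'` or `E`, which are torsion-free, so `x = 1`;
hence the involutions form the closed set `{x | x * x = 1} \ ker φ`.

By compactness, it suffices that the image `c` of `x` in every finite quotient `P = F ⧸ N` is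
conjugate into the image `A` of `G` or `B` of `E`. Otherwise `A` and `B` act freely on
`P ⧸ ⟨c⟩`, so the extension of `P` induced from `ℤ/4 ↠ ℤ/2 ≅ ⟨c⟩` splits over `A` and `B`,
while no lift of `c` to it is an involution. The universal property of `G ⋆ E` then lifts
`F → P` to this extension, and the image of `x` is an involutive lift of `c`.
-/

/-- `F` together with `ι₁ : G → F`, `ι₂ : E → F` is the free profinite product (coproduct)
of the profinite groups `G` and `E`. -/
def IsProfiniteCoprod (G E F : Type) [Group G] [TopologicalSpace G] [Group E]
    [TopologicalSpace E] [Group F] [TopologicalSpace F]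
    (ι₁ : G →* F) (ι₂ : E →* F) : Prop :=
  Continuous ι₁ ∧ Continuous ι₂ ∧
    ∀ (H : Type) [Group H] [TopologicalSpace H] [IsTopologicalGroup H] [CompactSpace H]
      [T2Space H] [TotallyDisconnectedSpace H] (f : G →* H) (g : E →* H),
      Continuous f → Continuous g →
        ∃! h : F →* H, Continuous h ∧ h.comp ι₁ = f ∧ h.comp ι₂ = g

open Subgroup

namespace ProfiniteGrp

lemma one_mem_of_forall_openNormalSubgroup {F : Type*} [Group F] [TopologicalSpace F]
    [IsTopologicalGroup F] [CompactSpace F] [TotallyDisconnectedSpace F] {K : Set F}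
    (hK : IsClosed K) (h : ∀ N : OpenNormalSubgroup F, ((N : Set F) ∩ K).Nonempty) : 1 ∈ K := by
  by_contra h1
  obtain ⟨N, hN⟩ := exist_openNormalSubgroup_sub_open_nhds_of_one hK.isOpen_compl h1
  obtain ⟨n, hnN, hnK⟩ := h N
  exact hN hnN hnK

end ProfiniteGrp

lemma MulAction.exists_potential_of_free {A X M : Type*} [Group A] [MulAction A X]
    [AddCommGroup M] (hfree : ∀ (u : A) (x : X), u • x = x → u = 1) (α : X → A → M)
    (hα : ∀ x u v, α x (u * v) = α x u + α (u⁻¹ • x) v) :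
    ∃ t : X → M, ∀ x u, t (u⁻¹ • x) = t x + α x u := by
  let r : X → X := fun x => (Quotient.mk (orbitRel A X) x).out
  have hr : ∀ (u : A) x, r (u • x) = r x := fun u x =>
    congrArg Quotient.out (Quotient.sound (mem_orbit x u))
  have hrx : ∀ x, ∃ w : A, w • x = r x := fun x =>
    mem_orbit_iff.mp (Quotient.mk_out (s := orbitRel A X) x)
  choose w hw using hrx
  have hw_smul : ∀ (u : A) x, w (u⁻¹ • x) = w x * u := fun u x => by
    have h := hfree ((w x * u)⁻¹ * w (u⁻¹ • x)) (u⁻¹ • x) (by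
      rw [mul_smul, hw, hr, inv_smul_eq_iff, mul_smul, smul_inv_smul, hw])
    exact inv_mul_eq_one.mp h |>.symm
  refine ⟨fun x => α (r x) (w x), fun x u => ?_⟩
  simp only [hr, hw_smul, hα]
  rw [inv_smul_eq_iff.mpr (hw x).symm]

abbrev castMod2 : ZMod 4 →+* ZMod 2 := ZMod.castHom (by norm_num) _

lemma castMod2_val (b : ZMod 2) : castMod2 (b.val : ZMod 4) = b := by
  revert b; decide

lemma add_self_ne_zero_of_castMod2_eq_one (a : ZMod 4) (ha : castMod2 a = 1) : a + a ≠ 0 := by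
  revert a; decide

section InducedExtension

variable {P : Type*} [Group P] {c : P}

lemma eq_one_or_eq_of_mem_zpowers (hc : c * c = 1) {a : P} (ha : a ∈ zpowers c) :
    a = 1 ∨ a = c := by
  obtain ⟨k, rfl⟩ := mem_zpowers_iff.mp ha
  have hc2 : c ^ (2 : ℤ) = 1 := by rw [zpow_two, hc]
  rcases Int.even_or_odd' k with ⟨m, rfl | rfl⟩
  · simp [zpow_mul, hc2]
  · simp [zpow_add, zpow_mul, hc2]

lemma out_inv_mul_mem_zpowers (x : P ⧸ zpowers c) (p : P) :
    (p⁻¹ • x).out⁻¹ * (p⁻¹ * x.out) ∈ zpowers c := by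
  rw [← QuotientGroup.eq, QuotientGroup.out_eq']
  conv_lhs => rw [← QuotientGroup.out_eq' x]
  rfl

lemma inv_smul_coe_one : c⁻¹ • ((1 : P) : P ⧸ zpowers c) = (1 : P) :=
  MulAction.mem_stabilizer_iff.mp (by simp [mem_zpowers c])

lemma eq_one_of_smul_eq_self (hc : c * c = 1) {A : Subgroup P}
    (hA : ∀ g : P, g * c * g⁻¹ ∉ A) (u : A) (x : P ⧸ zpowers c) (hux : u • x = x) : u = 1 := by
  induction x using QuotientGroup.induction_on with | H g => ?_
  have hmem : g⁻¹ * (u : P)⁻¹ * g ∈ zpowers c := by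
    simpa [mul_assoc] using QuotientGroup.eq.mp hux
  rcases eq_one_or_eq_of_mem_zpowers hc hmem with h | h
  · exact Subtype.ext (by simpa [mul_assoc, inv_mul_eq_one, mul_eq_one_iff_eq_inv] using h)
  · have hu : (u : P) = g * c * g⁻¹ := by
      rw [← inv_eq_of_mul_eq_one_right hc, ← h]; group
    exact absurd (hu ▸ u.2) (hA g)

variable [DecidableEq P]

variable (c) in
/-- For `p⁻¹` carrying the coset `x` to `p⁻¹ • x`, records whether it carries the chosen
representative of `x` to that of `p⁻¹ • x` (`0`) or to its translate by `c` (`1`). -/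
noncomputable def crossing (x : P ⧸ zpowers c) (p : P) : ZMod 2 :=
  if (p⁻¹ • x).out⁻¹ * (p⁻¹ * x.out) = 1 then 0 else 1

lemma crossing_mul (hc : c * c = 1) (x : P ⧸ zpowers c) (p p' : P) :
    crossing c x (p * p') = crossing c x p + crossing c (p⁻¹ • x) p' := by
  have hsplit : ((p * p')⁻¹ • x).out⁻¹ * ((p * p')⁻¹ * x.out)
      = ((p'⁻¹ • p⁻¹ • x).out⁻¹ * (p'⁻¹ * (p⁻¹ • x).out))
        * ((p⁻¹ • x).out⁻¹ * (p⁻¹ * x.out)) := by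
    rw [mul_inv_rev, mul_smul]; group
  unfold crossing
  rw [hsplit]
  rcases eq_one_or_eq_of_mem_zpowers hc (out_inv_mul_mem_zpowers x p) with h | h <;>
  rcases eq_one_or_eq_of_mem_zpowers hc (out_inv_mul_mem_zpowers (p⁻¹ • x) p') with h' | h' <;>
  · rw [h, h']
    split_ifs <;> simp_all <;> decide

lemma crossing_one (x : P ⧸ zpowers c) : crossing c x 1 = 0 := by
  simp [crossing]

lemma crossing_inv (hc : c * c = 1) (x : P ⧸ zpowers c) (p : P) :
    crossing c x p⁻¹ = crossing c (p • x) p := by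
  have h := crossing_mul hc (p • x) p p⁻¹
  rw [mul_inv_cancel, crossing_one, inv_smul_smul] at h
  exact (CharTwo.add_eq_zero.mp h.symm).symm

lemma crossing_self (hc1 : c ≠ 1) : crossing c (1 : P) c = 1 := by
  simp only [crossing, inv_smul_coe_one]
  refine if_neg fun h => hc1 ?_
  simpa [mul_assoc, inv_mul_eq_one] using h

variable (c) in
/-- The pullback of the embedding `p ↦ (crossing c · p, p)` of `P` into `ℤ/2 ≀ (P ⧸ ⟨c⟩)` along
`ℤ/4 ≀ (P ⧸ ⟨c⟩) → ℤ/2 ≀ (P ⧸ ⟨c⟩)`. -/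
@[ext]
structure InducedExtension (hc : c * c = 1) where
  coord : P ⧸ zpowers c → ZMod 4
  base : P
  castMod2_coord : ∀ x, castMod2 (coord x) = crossing c x base

namespace InducedExtension

variable {hc : c * c = 1}

instance : Mul (InducedExtension c hc) :=
  ⟨fun z w => ⟨fun x => z.coord x + w.coord (z.base⁻¹ • x), z.base * w.base, fun x => by
    rw [map_add, z.castMod2_coord, w.castMod2_coord, crossing_mul hc]⟩⟩

instance : One (InducedExtension c hc) :=
  ⟨⟨fun _ => 0, 1, fun x => by rw [crossing_one, map_zero]⟩⟩

instance : Inv (InducedExtension c hc) :=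
  ⟨fun z => ⟨fun x => -z.coord (z.base • x), z.base⁻¹, fun x => by
    rw [map_neg, z.castMod2_coord, crossing_inv hc, CharTwo.neg_eq]⟩⟩

@[simp] lemma mul_base (z w : InducedExtension c hc) : (z * w).base = z.base * w.base := rfl
@[simp] lemma mul_coord (z w : InducedExtension c hc) (x) :
    (z * w).coord x = z.coord x + w.coord (z.base⁻¹ • x) := rfl
@[simp] lemma one_base : (1 : InducedExtension c hc).base = 1 := rfl
@[simp] lemma one_coord (x) : (1 : InducedExtension c hc).coord x = 0 := rfl
@[simp] lemma inv_base (z : InducedExtension c hc) : z⁻¹.base = z.base⁻¹ := rfl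
@[simp] lemma inv_coord (z : InducedExtension c hc) (x) :
    z⁻¹.coord x = -z.coord (z.base • x) := rfl

instance : Group (InducedExtension c hc) where
  mul_assoc a b d := by ext <;> simp [mul_smul, add_assoc, mul_assoc]
  one_mul a := by ext <;> simp
  mul_one a := by ext <;> simp
  inv_mul_cancel a := by ext <;> simp

instance [Finite P] : Finite (InducedExtension c hc) :=
  Finite.of_injective (fun z => (z.coord, z.base)) fun z w h => by
    ext1 <;> simp_all

instance : TopologicalSpace (InducedExtension c hc) := ⊥

instance : DiscreteTopology (InducedExtension c hc) := ⟨rfl⟩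

def proj : InducedExtension c hc →* P where
  toFun := base
  map_one' := rfl
  map_mul' _ _ := rfl

/-- The coordinate at the coset `⟨c⟩` of a lift of `c` is odd, and squaring doubles it. -/
lemma mul_self_ne_one_of_proj_eq (hc1 : c ≠ 1) (z : InducedExtension c hc) (hz : proj z = c) :
    z * z ≠ 1 := by
  intro h
  have hodd : castMod2 (z.coord (1 : P)) = 1 := by
    rw [z.castMod2_coord, show z.base = c from hz, crossing_self hc1]
  apply add_self_ne_zero_of_castMod2_eq_one _ hodd
  have h1 := congrArg (coord · ((1 : P) : P ⧸ zpowers c)) h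
  simpa only [mul_coord, one_coord, show z.base = c from hz, inv_smul_coe_one] using h1

def splitting (A : Subgroup P) (t : P ⧸ zpowers c → ZMod 2)
    (ht : ∀ x (u : A), t ((u : P)⁻¹ • x) = t x + crossing c x u) :
    A →* InducedExtension c hc where
  toFun u := ⟨fun x => (t x).val - (t ((u : P)⁻¹ • x)).val, u, fun x => by
    rw [map_sub, castMod2_val, castMod2_val, ht, CharTwo.sub_eq_add, ← add_assoc,
      CharTwo.add_self_eq_zero, zero_add]⟩
  map_one' := by ext <;> simp
  map_mul' u v := by ext <;> simp [mul_smul]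

lemma exists_splitting (A : Subgroup P) (hA : ∀ g : P, g * c * g⁻¹ ∉ A) :
    ∃ s : A →* InducedExtension c hc, proj.comp s = A.subtype := by
  obtain ⟨t, ht⟩ := MulAction.exists_potential_of_free (eq_one_of_smul_eq_self hc hA)
    (fun x (u : A) => crossing c x u) fun x u v => crossing_mul hc x u v
  exact ⟨splitting A t ht, rfl⟩

end InducedExtension

end InducedExtension

namespace IsProfiniteCoprod

variable {G E F : Type} [Group G] [TopologicalSpace G] [Group E] [TopologicalSpace E]
  [Group F] [TopologicalSpace F] {ι₁ : G →* F} {ι₂ : E →* F}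

theorem hom_ext (hco : IsProfiniteCoprod G E F ι₁ ι₂) {H : Type} [Group H]
    [TopologicalSpace H] [IsTopologicalGroup H] [CompactSpace H] [T2Space H]
    [TotallyDisconnectedSpace H]
    {f g : F →* H} (hf : Continuous f) (hg : Continuous g) (h₁ : f.comp ι₁ = g.comp ι₁)
    (h₂ : f.comp ι₂ = g.comp ι₂) : f = g :=
  (hco.2.2 H _ _ (hf.comp hco.1) (hf.comp hco.2.1)).unique ⟨hf, rfl, rfl⟩ ⟨hg, h₁.symm, h₂.symm⟩

theorem injective_left (hco : IsProfiniteCoprod G E F ι₁ ι₂) [IsTopologicalGroup G]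
    [CompactSpace G] [T2Space G] [TotallyDisconnectedSpace G] : Function.Injective ι₁ := by
  obtain ⟨π, -, hπ, -⟩ := (hco.2.2 G (MonoidHom.id G) 1 continuous_id continuous_const).exists
  exact Function.LeftInverse.injective (DFunLike.congr_fun hπ)

theorem injective_right (hco : IsProfiniteCoprod G E F ι₁ ι₂) [IsTopologicalGroup E]
    [CompactSpace E] [T2Space E] [TotallyDisconnectedSpace E] : Function.Injective ι₂ := by
  obtain ⟨π, -, -, hπ⟩ := (hco.2.2 E 1 (MonoidHom.id E) continuous_const continuous_id).exists
  exact Function.LeftInverse.injective (DFunLike.congr_fun hπ)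

theorem exists_isConj_mem_range_quotient (hco : IsProfiniteCoprod G E F ι₁ ι₂)
    [IsTopologicalGroup F] [CompactSpace F] (N : OpenNormalSubgroup F) {x : F} (hx : x * x = 1) :
    ∃ s ∈ Set.range ι₁ ∪ Set.range ι₂,
      IsConj (x : F ⧸ (N : Subgroup F)) (s : F ⧸ (N : Subgroup F)) := by
  classical
  by_contra! hnone
  set q := QuotientGroup.mk' (N : Subgroup F)
  have hA : ∀ g, g * q x * g⁻¹ ∉ (q.comp ι₁).range := by
    rintro g ⟨a, ha⟩
    exact hnone (ι₁ a) (Or.inl ⟨a, rfl⟩) (isConj_iff.mpr ⟨g, ha.symm⟩)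
  have hB : ∀ g, g * q x * g⁻¹ ∉ (q.comp ι₂).range := by
    rintro g ⟨b, hb⟩
    exact hnone (ι₂ b) (Or.inr ⟨b, rfl⟩) (isConj_iff.mpr ⟨g, hb.symm⟩)
  have hc : q x * q x = 1 := by rw [← map_mul, hx, map_one]
  have hc1 : q x ≠ 1 := fun h => hA 1 (by simp [h, one_mem])
  obtain ⟨sA, hsA⟩ := InducedExtension.exists_splitting (hc := hc) _ hA
  obtain ⟨sB, hsB⟩ := InducedExtension.exists_splitting (hc := hc) _ hB
  have hq : Continuous q := continuous_quot_mk
  obtain ⟨h, ⟨hh, h₁, h₂⟩, -⟩ := hco.2.2 _ (sA.comp (q.comp ι₁).rangeRestrict)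
    (sB.comp (q.comp ι₂).rangeRestrict)
    ((continuous_of_discreteTopology (f := sA)).comp ((hq.comp hco.1).subtype_mk _))
    ((continuous_of_discreteTopology (f := sB)).comp ((hq.comp hco.2.1).subtype_mk _))
  have hproj : InducedExtension.proj.comp h = q :=
    hco.hom_ext ((continuous_of_discreteTopology (f := InducedExtension.proj)).comp hh) hq
      (by rw [MonoidHom.comp_assoc, h₁, ← MonoidHom.comp_assoc, hsA,
        MonoidHom.subtype_comp_rangeRestrict])
      (by rw [MonoidHom.comp_assoc, h₂, ← MonoidHom.comp_assoc, hsB,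
        MonoidHom.subtype_comp_rangeRestrict])
  exact InducedExtension.mul_self_ne_one_of_proj_eq hc1 (h x) (DFunLike.congr_fun hproj x)
    (by rw [← map_mul, hx, map_one])

theorem exists_isConj_mem_range (hco : IsProfiniteCoprod G E F ι₁ ι₂) [CompactSpace G]
    [CompactSpace E] [IsTopologicalGroup F] [CompactSpace F] [T2Space F]
    [TotallyDisconnectedSpace F] {x : F} (hx : x * x = 1) :
    ∃ s ∈ Set.range ι₁ ∪ Set.range ι₂, IsConj x s := by
  have hS : IsCompact (Set.range ι₁ ∪ Set.range ι₂) :=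
    (isCompact_range hco.1).union (isCompact_range hco.2.1)
  have hK : IsClosed ((fun p : F × F => p.1⁻¹ * (p.2 * x * p.2⁻¹)) ''
      ((Set.range ι₁ ∪ Set.range ι₂) ×ˢ Set.univ)) :=
    ((hS.prod isCompact_univ).image (by fun_prop)).isClosed
  obtain ⟨⟨s, g⟩, ⟨hs, -⟩, hsg⟩ := ProfiniteGrp.one_mem_of_forall_openNormalSubgroup hK fun N => by
    -- the image of `x` in `F ⧸ N` is conjugate into a factor
    obtain ⟨s, hs, hconj⟩ := hco.exists_isConj_mem_range_quotient N hx
    obtain ⟨g, hg⟩ := isConj_iff.mp hconj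
    obtain ⟨g, rfl⟩ := QuotientGroup.mk_surjective g
    refine ⟨s⁻¹ * (g * x * g⁻¹), QuotientGroup.eq.mp ?_, ⟨s, g⟩, ⟨hs, trivial⟩, rfl⟩
    simpa using hg.symm
  exact ⟨s, hs, isConj_iff.mpr ⟨g, (inv_mul_eq_one.mp hsg).symm⟩⟩

end IsProfiniteCoprod

theorem stmt_12_general (G E F : Type)
    [Group G] [TopologicalSpace G] [IsTopologicalGroup G] [CompactSpace G] [T2Space G]
    [TotallyDisconnectedSpace G]
    [Group E] [TopologicalSpace E] [IsTopologicalGroup E] [CompactSpace E] [T2Space E]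
    [TotallyDisconnectedSpace E]
    [Group F] [TopologicalSpace F] [IsTopologicalGroup F] [CompactSpace F] [T2Space F]
    [TotallyDisconnectedSpace F]
    (ι₁ : G →* F) (ι₂ : E →* F) (hco : IsProfiniteCoprod G E F ι₁ ι₂)
    (G' : Subgroup G)
    (hG'tf : ∀ x ∈ G', IsOfFinOrder x → x = 1)
    (hEtf : ∀ y : E, IsOfFinOrder y → y = 1)
    (φ : F →* Multiplicative (ZMod 2)) (hφopen : IsOpen (φ.ker : Set F))
    (hφG : (φ.comp ι₁).ker = G') :
    (∀ x ∈ φ.ker, x * x = 1 → x = 1) ∧ IsClosed {x : F | x * x = 1 ∧ x ≠ 1} := by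
  have hinv : ∀ x ∈ φ.ker, x * x = 1 → x = 1 := by
    intro x hx hxx
    have hfin : IsOfFinOrder x := isOfFinOrder_iff_pow_eq_one.mpr ⟨2, two_pos, by rwa [sq]⟩
    obtain ⟨s, ⟨a, rfl⟩ | ⟨b, rfl⟩, hxs⟩ := hco.exists_isConj_mem_range hxx
    · have haG' : a ∈ G' := by
        rw [← hφG, MonoidHom.mem_ker, MonoidHom.comp_apply,
          ← isConj_iff_eq.mp (φ.map_isConj hxs)]
        exact hx
      have ha : a = 1 := hG'tf a haG'
        (hco.injective_left.isOfFinOrder_iff.mp (hxs.isOfFinOrder hfin))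
      simpa [ha] using hxs
    · have hb : b = 1 :=
        hEtf b (hco.injective_right.isOfFinOrder_iff.mp (hxs.isOfFinOrder hfin))
      simpa [hb] using hxs
  refine ⟨hinv, ?_⟩
  have hset : {x : F | x * x = 1 ∧ x ≠ 1} = {x | x * x = 1} ∩ (φ.ker : Set F)ᶜ := by
    ext x
    exact and_congr_right fun hxx =>
      ⟨fun hx1 hx => hx1 (hinv x hx hxx), fun hx h1 => hx (h1 ▸ one_mem _)⟩
  rw [hset]
  exact (isClosed_eq (by fun_prop) continuous_const).inter hφopen.isClosed_compl

/-- Let `G` be a profinite group with an open subgroup `G'` of index ≤ 2 that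
is torsion-free, `E` a torsion-free profinite group, and `F = G ⋆ E` the free profinite
product. Let `φ : F → ℤ/2ℤ` be the homomorphism determined by `E → 1` and `G → G/G'`, and
`G'_⋆ = ker φ`. Then `G'_⋆` contains no involutions; in particular the set of involutions
of `F` is closed. -/
theorem stmt_12 (G E F : Type)
    [Group G] [TopologicalSpace G] [IsTopologicalGroup G] [CompactSpace G] [T2Space G]
    [TotallyDisconnectedSpace G]
    [Group E] [TopologicalSpace E] [IsTopologicalGroup E] [CompactSpace E] [T2Space E]
    [TotallyDisconnectedSpace E]
    [Group F] [TopologicalSpace F] [IsTopologicalGroup F] [CompactSpace F] [T2Space F]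
    [TotallyDisconnectedSpace F]
    (ι₁ : G →* F) (ι₂ : E →* F) (hco : IsProfiniteCoprod G E F ι₁ ι₂)
    (G' : Subgroup G) (hG'open : IsOpen (G' : Set G)) (hG'index : G'.index ≤ 2)
    (hG'tf : ∀ x ∈ G', IsOfFinOrder x → x = 1)
    (hEtf : ∀ y : E, IsOfFinOrder y → y = 1)
    (φ : F →* Multiplicative (ZMod 2)) (hφopen : IsOpen (φ.ker : Set F))
    (hφE : φ.comp ι₂ = 1) (hφG : (φ.comp ι₁).ker = G') :
    (∀ x ∈ φ.ker, x * x = 1 → x = 1) ∧ IsClosed {x : F | x * x = 1 ∧ x ≠ 1} :=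
  stmt_12_general G E F ι₁ ι₂ hco G' hG'tf hEtf φ hφopen hφG
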